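/- arXiv:1701.06656 — 2 statements merged into one kernel-verified Lean document; each statement's English description precedes it below -/
import Mathlib

section
/- Let Φ₀ : ℝ → ℝ^L be a twice continuously differentiable solution of Φ₀''(z) = ∇Ψ(Φ₀(z)) - (1/L)(1 · ∇Ψ(Φ₀(z))) 1 with Φ₀'(z) ∈ TG for all z, such that Ψ(Φ₀(z)) → 0 and |Φ₀'(z)| → 0 as z → -∞. Then the equipartition of energy Ψ(Φ₀(z)) = ½|Φ₀'(z)|² holds for all z ∈ ℝ. -/
/-!
Along a solution of the projected Euler–Lagrange equation the energy
`E = Ψ ∘ Φ₀ - ½ |Φ₀'|²` is conserved: `E' = DΨ(Φ₀) Φ₀' - ⟨Φ₀', Φ₀''⟩`, and `Φ₀''` differs from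
`∇Ψ(Φ₀)` by a multiple of `1`, which is orthogonal to `Φ₀' ∈ TG`. The decay conditions say that
`E → 0` at `-∞`, so the constant `E` vanishes identically.
-/

open Finset Filter Topology

lemma sum_mul_sub_const_of_sum_eq_zero {ι : Type*} [Fintype ι] {v : ι → ℝ}
    (hv : ∑ i, v i = 0) (w : ι → ℝ) (c : ℝ) :
    ∑ i, v i * (w i - c) = ∑ i, v i * w i := by
  simp only [mul_sub, sum_sub_distrib, ← sum_mul, hv, zero_mul, sub_zero]

lemma ContinuousLinearMap.apply_eq_sum_mul_apply_single {ι : Type*} [Fintype ι] [DecidableEq ι]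
    (f : (ι → ℝ) →L[ℝ] ℝ) (v : ι → ℝ) : f v = ∑ i, v i * f (Pi.single i 1) := by
  conv_lhs => rw [pi_eq_sum_univ' v]
  simp only [map_sum, map_smul, smul_eq_mul]

lemma hasDerivAt_half_sum_sq {ι : Type*} [Fintype ι] {V V' : ℝ → ι → ℝ} {z : ℝ}
    (hV : ∀ i, HasDerivAt (fun t => V t i) (V' z i) z) :
    HasDerivAt (fun t => 1 / 2 * ∑ i, V t i ^ 2) (∑ i, V z i * V' z i) z := by
  have hsum : HasDerivAt (fun t => ∑ i, V t i ^ 2) (∑ i, 2 * V z i * V' z i) z := by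
    refine HasDerivAt.fun_sum fun i _ => ?_
    simpa [mul_comm] using (hV i).fun_pow 2
  refine (hsum.const_mul (1 / 2 : ℝ)).congr_deriv ?_
  rw [mul_sum]
  exact sum_congr rfl fun i _ => by ring

lemma hasDerivAt_potential_sub_kinetic {ι : Type*} [Fintype ι] {Ψ : (ι → ℝ) → ℝ}
    {Φ Φ' Φ'' : ℝ → ι → ℝ} {z : ℝ} (hΨ : DifferentiableAt ℝ Ψ (Φ z))
    (hΦ : ∀ i, HasDerivAt (fun t => Φ t i) (Φ' z i) z)
    (hΦ' : ∀ i, HasDerivAt (fun t => Φ' t i) (Φ'' z i) z) :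
    HasDerivAt (fun t => Ψ (Φ t) - 1 / 2 * ∑ i, Φ' t i ^ 2)
      (fderiv ℝ Ψ (Φ z) (Φ' z) - ∑ i, Φ' z i * Φ'' z i) z :=
  (hΨ.hasFDerivAt.comp_hasDerivAt z (hasDerivAt_pi.mpr hΦ)).sub (hasDerivAt_half_sum_sq hΦ')

lemma eq_of_hasDerivAt_zero_of_tendsto {E : Type*} [NormedAddCommGroup E] [NormedSpace ℝ E]
    {g : ℝ → E} {l : Filter ℝ} [l.NeBot] {a : E} (hg : ∀ z, HasDerivAt g 0 z)
    (hlim : Tendsto g l (𝓝 a)) (z : ℝ) : g z = a := by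
  have hconst : ∀ t, g t = g z := fun t =>
    is_const_of_deriv_eq_zero (fun s => (hg s).differentiableAt) (fun s => (hg s).deriv) t z
  exact tendsto_nhds_unique (tendsto_const_nhds.congr fun t => (hconst t).symm) hlim

theorem equipartition_of_energy_general
    (L : ℕ)
    (Ψ : (Fin L → ℝ) → ℝ) (hΨ : ContDiff ℝ 1 Ψ)
    (Φ Φ' Φ'' : ℝ → Fin L → ℝ)
    (hΦ : ∀ z i, HasDerivAt (fun t => Φ t i) (Φ' z i) z)
    (hΦ' : ∀ z i, HasDerivAt (fun t => Φ' t i) (Φ'' z i) z)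
    (hODE : ∀ z i, Φ'' z i
      = fderiv ℝ Ψ (Φ z) (Pi.single i 1)
        - (1 / (L : ℝ)) * ∑ j, fderiv ℝ Ψ (Φ z) (Pi.single j 1))
    (hTG : ∀ z, (∑ i, Φ' z i) = 0)
    (hdecay1 : Tendsto (fun z => Ψ (Φ z)) atBot (nhds 0))
    (hdecay2 : Tendsto (fun z => ∑ i, (Φ' z i) ^ 2) atBot (nhds 0)) :
    ∀ z, Ψ (Φ z) = (1 / 2) * ∑ i, (Φ' z i) ^ 2 := by
  have hconserved : ∀ z, HasDerivAt (fun t => Ψ (Φ t) - 1 / 2 * ∑ i, Φ' t i ^ 2) 0 z := by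
    intro z
    have hpower : ∑ i, Φ' z i * Φ'' z i = fderiv ℝ Ψ (Φ z) (Φ' z) := by
      simp only [hODE z, sum_mul_sub_const_of_sum_eq_zero (hTG z)]
      exact (ContinuousLinearMap.apply_eq_sum_mul_apply_single _ _).symm
    simpa only [hpower, sub_self] using
      hasDerivAt_potential_sub_kinetic (hΨ.differentiable one_ne_zero (Φ z)) (hΦ z) (hΦ' z)
  have hlim : Tendsto (fun z => Ψ (Φ z) - 1 / 2 * ∑ i, Φ' z i ^ 2) atBot (𝓝 0) := by
    simpa only [mul_zero, sub_zero] using hdecay1.sub (hdecay2.const_mul (1 / 2))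
  intro z
  linarith [eq_of_hasDerivAt_zero_of_tendsto hconserved hlim z]

theorem equipartition_of_energy
    (L : ℕ) (hL : 2 ≤ L)
    (Ψ : (Fin L → ℝ) → ℝ) (hΨ : ContDiff ℝ 1 Ψ) (hΨnn : ∀ x, 0 ≤ Ψ x)
    (Φ Φ' Φ'' : ℝ → Fin L → ℝ)
    (hΦ : ∀ z i, HasDerivAt (fun t => Φ t i) (Φ' z i) z)
    (hΦ' : ∀ z i, HasDerivAt (fun t => Φ' t i) (Φ'' z i) z)
    (hODE : ∀ z i, Φ'' z i
      = fderiv ℝ Ψ (Φ z) (Pi.single i 1)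
        - (1 / (L : ℝ)) * ∑ j, fderiv ℝ Ψ (Φ z) (Pi.single j 1))
    (hTG : ∀ z, (∑ i, Φ' z i) = 0)
    (hdecay1 : Tendsto (fun z => Ψ (Φ z)) atBot (nhds 0))
    (hdecay2 : Tendsto (fun z => ∑ i, (Φ' z i) ^ 2) atBot (nhds 0)) :
    ∀ z, Ψ (Φ z) = (1 / 2) * ∑ i, (Φ' z i) ^ 2 :=
  equipartition_of_energy_general L Ψ hΨ Φ Φ' Φ'' hΦ hΦ' hODE hTG hdecay1 hdecay2
end

section
/- Let φ : ℝ → ℝ be a monotone increasing C² solution of -φ'' + W̃'(φ) = 0 with φ(±∞) = ±1 and W̃(φ(z)) → 0, φ'(z) → 0 as z → -∞, where W̃ ≥ 0 with W̃(±1)=0. Then ∫_{-∞}^{∞} (W̃(φ) + ½(φ')²) dz = ∫_{-1}^{1} √(2 W̃(s)) ds. -/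
/-!
Multiplying the equation by `φ'` shows that `½ φ'² - W(φ)` is constant, and the decay at `-∞`
makes the constant zero (equipartition). Hence the energy density equals `|φ'| √(2 W(φ))`, and
the change of variables `s = φ z`, with `φ` a strictly increasing bijection of `ℝ` onto `(-1, 1)`,
turns its integral into `∫₋₁¹ √(2 W)`. The Jacobian form of the change of variables holds without
integrability assumptions, so no truncation to bounded intervals is needed.
-/

open Filter Set Topology MeasureTheory

theorem StrictMono.range_eq_Ioo_of_tendsto {α δ : Type*} [LinearOrder α] [TopologicalSpace α]
    [OrderTopology α] [PreconnectedSpace α] [Nonempty α] [NoMinOrder α] [NoMaxOrder α]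
    [LinearOrder δ] [TopologicalSpace δ] [OrderClosedTopology δ]
    {f : α → δ} {a b : δ} (hf : StrictMono f) (hfc : Continuous f)
    (hbot : Tendsto f atBot (𝓝 a)) (htop : Tendsto f atTop (𝓝 b)) :
    range f = Ioo a b := by
  refine Subset.antisymm ?_ fun c hc => ?_
  · rintro _ ⟨x, rfl⟩
    obtain ⟨x₀, hx₀⟩ := exists_lt x
    obtain ⟨x₁, hx₁⟩ := exists_gt x
    exact ⟨(hf.monotone.le_of_tendsto hbot x₀).trans_lt (hf hx₀),
      (hf hx₁).trans_le (hf.monotone.ge_of_tendsto htop x₁)⟩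
  · exact mem_range_of_exists_le_of_exists_ge hfc
      (hbot.eventually (eventually_le_nhds hc.1)).exists
      (htop.eventually (eventually_ge_nhds hc.2)).exists

section Equipartition

variable {W W' φ φ' φ'' : ℝ → ℝ}

theorem hasDerivAt_half_sq_sub_potential (hW : ∀ s, HasDerivAt W (W' s) s)
    (hφ : ∀ z, HasDerivAt φ (φ' z) z) (hφ' : ∀ z, HasDerivAt φ' (φ'' z) z)
    (hODE : ∀ z, φ'' z = W' (φ z)) (z : ℝ) :
    HasDerivAt (fun z => 1 / 2 * φ' z ^ 2 - W (φ z)) 0 z := by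
  refine ((((hφ' z).pow 2).const_mul (1 / 2)).sub ((hW (φ z)).comp z (hφ z))).congr_deriv ?_
  rw [hODE]
  ring

theorem potential_eq_half_sq_of_tendsto_atBot (hW : ∀ s, HasDerivAt W (W' s) s)
    (hφ : ∀ z, HasDerivAt φ (φ' z) z) (hφ' : ∀ z, HasDerivAt φ' (φ'' z) z)
    (hODE : ∀ z, φ'' z = W' (φ z))
    (hdecayW : Tendsto (fun z => W (φ z)) atBot (𝓝 0)) (hdecayφ' : Tendsto φ' atBot (𝓝 0))
    (z : ℝ) : W (φ z) = 1 / 2 * φ' z ^ 2 := by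
  set E := fun z => 1 / 2 * φ' z ^ 2 - W (φ z)
  have hE' := hasDerivAt_half_sq_sub_potential hW hφ hφ' hODE
  have hE (x : ℝ) : E x = E z :=
    is_const_of_deriv_eq_zero (fun y => (hE' y).differentiableAt) (fun y => (hE' y).deriv) x z
  have hlim : Tendsto E atBot (𝓝 (1 / 2 * 0 ^ 2 - 0)) :=
    (tendsto_const_nhds.mul (hdecayφ'.pow 2)).sub hdecayW
  have hEz : E z = 0 := by
    simpa using tendsto_nhds_unique (tendsto_const_nhds.congr fun x => (hE x).symm) hlim
  simp only [E] at hEz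
  linarith

end Equipartition

theorem heteroclinic_energy_eq_surface_tension_general
    (W : ℝ → ℝ) (hW : ContDiff ℝ 1 W)
    (φ φ' φ'' : ℝ → ℝ)
    (hφ : ∀ z, HasDerivAt φ (φ' z) z)
    (hφ' : ∀ z, HasDerivAt φ' (φ'' z) z)
    (hmono : StrictMono φ)
    (hODE : ∀ z, -φ'' z + deriv W (φ z) = 0)
    (htop : Tendsto φ atTop (nhds 1))
    (hbot : Tendsto φ atBot (nhds (-1)))
    (hdecayW : Tendsto (fun z => W (φ z)) atBot (nhds 0))
    (hdecayφ' : Tendsto φ' atBot (nhds 0)) :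
    ∫ z : ℝ, (W (φ z) + (1 / 2) * (φ' z) ^ 2)
      = ∫ s in (-1 : ℝ)..1, Real.sqrt (2 * W s) := by
  have hequi := potential_eq_half_sq_of_tendsto_atBot
    (fun s => (hW.differentiable one_ne_zero s).hasDerivAt) hφ hφ'
    (fun z => by linarith [hODE z]) hdecayW hdecayφ'
  have hrange : range φ = Ioo (-1) 1 := hmono.range_eq_Ioo_of_tendsto
    (continuous_iff_continuousAt.2 fun z => (hφ z).continuousAt) hbot htop
  have hdensity (z : ℝ) : W (φ z) + 1 / 2 * φ' z ^ 2 = |φ' z| * Real.sqrt (2 * W (φ z)) := by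
    rw [hequi, show 2 * (1 / 2 * φ' z ^ 2) = φ' z ^ 2 by ring, Real.sqrt_sq_eq_abs,
      abs_mul_abs_self]
    ring
  calc ∫ z, (W (φ z) + 1 / 2 * φ' z ^ 2)
      = ∫ z, |φ' z| * Real.sqrt (2 * W (φ z)) := by simp only [hdensity]
    _ = ∫ s in range φ, Real.sqrt (2 * W s) := by
        simpa using (integral_image_eq_integral_abs_deriv_smul MeasurableSet.univ
          (fun z _ => (hφ z).hasDerivWithinAt) hmono.injective.injOn
          fun s => Real.sqrt (2 * W s)).symm
    _ = ∫ s in (-1 : ℝ)..1, Real.sqrt (2 * W s) := by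
        rw [hrange, intervalIntegral.integral_of_le (by norm_num), integral_Ioc_eq_integral_Ioo]

theorem heteroclinic_energy_eq_surface_tension
    (W : ℝ → ℝ) (hW : ContDiff ℝ 1 W) (hWnn : ∀ s, 0 ≤ W s)
    (hW1 : W 1 = 0) (hWneg1 : W (-1) = 0)
    (hWzero : ∀ s, W s = 0 → s = 1 ∨ s = -1)
    (φ φ' φ'' : ℝ → ℝ)
    (hφ : ∀ z, HasDerivAt φ (φ' z) z)
    (hφ' : ∀ z, HasDerivAt φ' (φ'' z) z)
    (hmono : StrictMono φ)
    (hODE : ∀ z, -φ'' z + deriv W (φ z) = 0)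
    (htop : Tendsto φ atTop (nhds 1))
    (hbot : Tendsto φ atBot (nhds (-1)))
    (hdecayW : Tendsto (fun z => W (φ z)) atBot (nhds 0))
    (hdecayφ' : Tendsto φ' atBot (nhds 0)) :
    ∫ z : ℝ, (W (φ z) + (1 / 2) * (φ' z) ^ 2)
      = ∫ s in (-1 : ℝ)..1, Real.sqrt (2 * W s) :=
  heteroclinic_energy_eq_surface_tension_general W hW φ φ' φ'' hφ hφ' hmono hODE htop hbot hdecayW
    hdecayφ'
end
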